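/- arXiv:1601.01298 — 2 statements merged into one kernel-verified Lean document; each statement's English description precedes it below -/
import Mathlib

section
/- If G is a finite dismantlable graph with at least two vertices and u is a vertex dominated by another vertex v (with N[v] ⊇ N[u]), then G - u is dismantlable. -/
/-!
Encode a dismantling as a list of vertices and induct on it. For the list `x :: t`, either
`x = u` and `t` is the answer, or `u` survives into `t`, where it is still dominated by a vertex
other than itself (by `v`, or by transitivity by the vertex dominating `x`); then `u` can be
removed from `t` by induction, and `x` keeps a dominator other than `u`. The one exception is
when `x` and `u` dominate each other on `x :: t`: they are twins there, so exchanging them maps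
the dismantling `t` to a dismantling of `(x :: t) - u`.
-/

/-- The closed neighbourhood `N[v]` of a vertex. -/
def closedNbhd {V : Type*} (G : SimpleGraph V) (v : V) : Set V :=
  insert v {u | G.Adj v u}

/-- `v` dominates `u`: `N[v] ⊇ N[u]`. -/
def Dominates {V : Type*} (G : SimpleGraph V) (v u : V) : Prop :=
  closedNbhd G u ⊆ closedNbhd G v

/-- `v` dominates `u` in the subgraph induced on `S`. -/
def DominatesOn {V : Type*} (G : SimpleGraph V) (S : Set V) (v u : V) : Prop :=
  ∀ w ∈ S, w ∈ closedNbhd G u → w ∈ closedNbhd G v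

/-- A (finite) graph is dismantlable: its vertices can be ordered `v_1, …, v_n` so that
for each `i < n` some later `v_j` dominates `v_i` in the subgraph induced on
`{v_i, …, v_n}`. -/
def Dismantlable {V : Type*} (G : SimpleGraph V) : Prop :=
  ∃ (n : ℕ) (e : Fin n ≃ V), ∀ i : Fin n, (i : ℕ) + 1 < n →
    ∃ j : Fin n, i < j ∧
      DominatesOn G {w | ∃ k : Fin n, i ≤ k ∧ e k = w} (e j) (e i)

/-- A full-information cop strategy: an initial vertex, and a move function taking the
current cop and robber positions to a new cop position, which must be the current one or
an adjacent one. -/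
structure CopStrategy {V : Type*} (G : SimpleGraph V) where
  init : V
  move : V → V → V
  valid : ∀ c r, move c r = c ∨ G.Adj c (move c r)

/-- A full-information robber strategy: an initial vertex chosen knowing the cop's start,
and a move function taking the cop's (just updated) position and the robber's position to
a new robber position, which must be the current one or an adjacent one. -/
structure RobberStrategy {V : Type*} (G : SimpleGraph V) where
  init : V → V
  move : V → V → V
  valid : ∀ c r, move c r = r ∨ G.Adj r (move c r)

/-- The pair of (cop, robber) positions after `k` full rounds of play: the cop moves
first in each round, then the robber responds. -/
def play {V : Type*} (G : SimpleGraph V) (cs : CopStrategy G) (rs : RobberStrategy G) :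
    ℕ → V × V
  | 0 => (cs.init, rs.init cs.init)
  | k + 1 =>
      let p := play G cs rs k
      let c' := cs.move p.1 p.2
      (c', rs.move c' p.2)

/-- The cop wins: there is a cop strategy such that against every robber strategy, at some
round the cop's move lands on the robber's current vertex. -/
def CopWin {V : Type*} (G : SimpleGraph V) : Prop :=
  ∃ cs : CopStrategy G, ∀ rs : RobberStrategy G,
    ∃ k : ℕ, (play G cs rs (k + 1)).1 = (play G cs rs k).2

section ClosedNbhd

variable {V : Type*} {G : SimpleGraph V}

lemma mem_closedNbhd {w z : V} : w ∈ closedNbhd G z ↔ w = z ∨ G.Adj z w := Iff.rfl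

lemma mem_closedNbhd_comm {w z : V} : w ∈ closedNbhd G z ↔ z ∈ closedNbhd G w := by
  rw [mem_closedNbhd, mem_closedNbhd, eq_comm, G.adj_comm]

lemma mem_closedNbhd_induce {S : Set V} {w z : S} :
    (w : V) ∈ closedNbhd G z ↔ w ∈ closedNbhd (G.induce S) z := by
  simp [mem_closedNbhd, Subtype.ext_iff]

lemma swap_mem_closedNbhd_swap_iff [DecidableEq V] {S : Set V} {a b : V} (ha : a ∈ S)
    (hb : b ∈ S) (htwin : ∀ q ∈ S, q ∈ closedNbhd G a ↔ q ∈ closedNbhd G b) {w z : V}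
    (hw : w ∈ S) (hz : z ∈ S) :
    Equiv.swap a b w ∈ closedNbhd G (Equiv.swap a b z) ↔ w ∈ closedNbhd G z := by
  have hswap : ∀ w q, q ∈ S → (Equiv.swap a b w ∈ closedNbhd G q ↔ w ∈ closedNbhd G q) := by
    intro w q hq
    rw [Equiv.swap_apply_def]
    split_ifs with hwa hwb
    · rw [hwa, mem_closedNbhd_comm, ← htwin q hq, mem_closedNbhd_comm]
    · rw [hwb, mem_closedNbhd_comm, htwin q hq, mem_closedNbhd_comm]
    · rfl
  have hσz : Equiv.swap a b z ∈ S := by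
    rw [Equiv.swap_apply_def]
    split_ifs <;> assumption
  rw [hswap w _ hσz, mem_closedNbhd_comm, hswap z w hw, mem_closedNbhd_comm]

lemma DominatesOn.mono {S T : Set V} {x y : V} (h : DominatesOn G T y x) (hST : S ⊆ T) :
    DominatesOn G S y x :=
  fun w hw => h w (hST hw)

lemma DominatesOn.trans {S : Set V} {x y z : V} (hyx : DominatesOn G S y x)
    (hzy : DominatesOn G S z y) : DominatesOn G S z x :=
  fun w hw hwx => hzy w hw (hyx w hw hwx)

end ClosedNbhd

section DismantlingOrder

variable {V : Type*} {G : SimpleGraph V}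

def IsDismantlingOrder (G : SimpleGraph V) (l : List V) : Prop :=
  ∀ i (hi : i + 1 < l.length), ∃ y ∈ l.drop (i + 1), DominatesOn G {w | w ∈ l.drop i} y l[i]

lemma isDismantlingOrder_nil : IsDismantlingOrder G [] :=
  fun _ hi => absurd hi (by simp)

lemma isDismantlingOrder_cons {x : V} {t : List V} :
    IsDismantlingOrder G (x :: t) ↔
      (t ≠ [] → ∃ y ∈ t, DominatesOn G {w | w ∈ x :: t} y x) ∧ IsDismantlingOrder G t := by
  constructor
  · intro h
    refine ⟨fun ht => ?_, fun i hi => ?_⟩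
    · simpa using h 0 (by simpa [List.length_pos_iff] using ht)
    · simpa using h (i + 1) (by simpa using hi)
  · rintro ⟨h₀, ht⟩ (_ | i) hi
    · simpa using h₀ (by rintro rfl; simp at hi)
    · simpa using ht i (by simpa using hi)

lemma isDismantlingOrder_map_iff {W : Type*} {G' : SimpleGraph W} (σ : V → W) {l : List V}
    (hσ : ∀ w ∈ l, ∀ z ∈ l, σ w ∈ closedNbhd G' (σ z) ↔ w ∈ closedNbhd G z) :
    IsDismantlingOrder G' (l.map σ) ↔ IsDismantlingOrder G l := by
  induction l with
  | nil => simp only [List.map_nil, isDismantlingOrder_nil]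
  | cons x t ih =>
    have hdom : ∀ y ∈ t, DominatesOn G' {w | w ∈ σ x :: t.map σ} (σ y) (σ x) ↔
        DominatesOn G {w | w ∈ x :: t} y x := by
      intro y hy
      simp only [DominatesOn, Set.mem_ofPred_eq, ← List.map_cons, List.forall_mem_map]
      exact forall₂_congr fun w hw => by
        rw [hσ w hw x List.mem_cons_self, hσ w hw y (List.mem_cons_of_mem x hy)]
    rw [List.map_cons, isDismantlingOrder_cons, isDismantlingOrder_cons,
      ih fun w hw z hz => hσ w (List.mem_cons_of_mem x hw) z (List.mem_cons_of_mem x hz)]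
    simp only [ne_eq, List.map_eq_nil_iff, List.mem_map, exists_exists_and_eq_and]
    exact and_congr_left' <| imp_congr_right fun _ => exists_congr fun y =>
      and_congr_right fun hy => hdom y hy

lemma perm_map_swap_of_mem [DecidableEq V] {x u : V} {t : List V} (hnd : t.Nodup) (hxt : x ∉ t)
    (hut : u ∈ t) : (t.map (Equiv.swap x u)).Perm (x :: t.erase u) := by
  have hfix : ∀ w ∈ t.erase u, Equiv.swap x u w = id w := fun w hw =>
    Equiv.swap_apply_of_ne_of_ne (fun h => hxt (h ▸ List.mem_of_mem_erase hw))
      (hnd.mem_erase_iff.mp hw).1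
  calc (t.map (Equiv.swap x u)).Perm ((u :: t.erase u).map (Equiv.swap x u)) :=
        (List.perm_cons_erase hut).map _
    _ = x :: t.erase u := by
      rw [List.map_cons, Equiv.swap_apply_right, List.map_congr_left hfix, List.map_id]

lemma IsDismantlingOrder.map_swap [DecidableEq V] {x u : V} {t : List V}
    (ht : IsDismantlingOrder G t) (hut : u ∈ t) (hxu : DominatesOn G {w | w ∈ x :: t} x u)
    (hux : DominatesOn G {w | w ∈ x :: t} u x) :
    IsDismantlingOrder G (t.map (Equiv.swap x u)) :=
  (isDismantlingOrder_map_iff _ fun _ hw _ hz =>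
    swap_mem_closedNbhd_swap_iff (S := {w | w ∈ x :: t}) List.mem_cons_self
      (List.mem_cons_of_mem x hut) (fun q hq => ⟨hux q hq, hxu q hq⟩)
      (List.mem_cons_of_mem x hw) (List.mem_cons_of_mem x hz)).mpr ht

theorem IsDismantlingOrder.exists_perm_erase [DecidableEq V] {l : List V}
    (hl : IsDismantlingOrder G l) (hnd : l.Nodup) {u v : V} (hu : u ∈ l) (hv : v ∈ l)
    (hvu : v ≠ u) (hdom : DominatesOn G {w | w ∈ l} v u) :
    ∃ l', l'.Perm (l.erase u) ∧ IsDismantlingOrder G l' := by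
  induction l generalizing v with
  | nil => simp at hu
  | cons x t ih =>
    obtain ⟨hx, ht⟩ := isDismantlingOrder_cons.mp hl
    obtain ⟨hxt, hndt⟩ := List.nodup_cons.mp hnd
    by_cases hxu : x = u
    · subst hxu
      exact ⟨t, by rw [List.erase_cons_head], ht⟩
    rw [List.erase_cons_tail (by simpa using hxu)]
    have hut : u ∈ t := (List.mem_cons.mp hu).resolve_left (Ne.symm hxu)
    obtain ⟨y, hyt, hy⟩ := hx (List.ne_nil_of_mem hut)
    by_cases htwin : v = x ∧ y = u
    · obtain ⟨rfl, rfl⟩ := htwin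
      exact ⟨t.map (Equiv.swap v y), perm_map_swap_of_mem hndt hxt hut, ht.map_swap hut hdom hy⟩
    have hsub : {w | w ∈ t} ⊆ {w | w ∈ x :: t} := fun w hw => List.mem_cons_of_mem x hw
    obtain ⟨⟨a, hat, hau, ha⟩, ⟨b, hbt, hbu, hb⟩⟩ :
        (∃ a ∈ t, a ≠ u ∧ DominatesOn G {w | w ∈ x :: t} a x) ∧
          ∃ b ∈ t, b ≠ u ∧ DominatesOn G {w | w ∈ t} b u := by
      by_cases hyu : y = u
      · subst hyu
        have hvt : v ∈ t := (List.mem_cons.mp hv).resolve_left fun h => htwin ⟨h, rfl⟩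
        exact ⟨⟨v, hvt, hvu, hy.trans hdom⟩, ⟨v, hvt, hvu, hdom.mono hsub⟩⟩
      refine ⟨⟨y, hyt, hyu, hy⟩, ?_⟩
      by_cases hvx : v = x
      · subst hvx
        exact ⟨y, hyt, hyu, (hdom.trans hy).mono hsub⟩
      · exact ⟨v, (List.mem_cons.mp hv).resolve_left hvx, hvu, hdom.mono hsub⟩
    obtain ⟨t', hperm, ht'⟩ := ih ht hndt hut hbt hbu hb
    have hat' : a ∈ t' := hperm.mem_iff.mpr (hndt.mem_erase_iff.mpr ⟨hau, hat⟩)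
    have hsub' : {w | w ∈ x :: t'} ⊆ {w | w ∈ x :: t} :=
      List.cons_subset_cons x fun w hw => List.erase_subset (hperm.subset hw)
    exact ⟨x :: t', hperm.cons x,
      isDismantlingOrder_cons.mpr ⟨fun _ => ⟨a, hat', ha.mono hsub'⟩, ht'⟩⟩

end DismantlingOrder

section Dismantlable

variable {V : Type*} {G : SimpleGraph V}

lemma mem_drop_ofFn {n : ℕ} (f : Fin n → V) (i : ℕ) {w : V} :
    w ∈ (List.ofFn f).drop i ↔ ∃ k : Fin n, i ≤ k ∧ f k = w := by
  rw [List.mem_drop_iff_getElem]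
  constructor
  · rintro ⟨j, hj, rfl⟩
    exact ⟨⟨i + j, by rw [List.length_ofFn] at hj; omega⟩, by simp, by simp⟩
  · rintro ⟨k, hik, rfl⟩
    refine ⟨k - i, by rw [List.length_ofFn]; omega, ?_⟩
    simp only [List.getElem_ofFn]
    congr
    omega

lemma isDismantlingOrder_ofFn_iff {n : ℕ} (f : Fin n → V) :
    IsDismantlingOrder G (List.ofFn f) ↔ ∀ i : Fin n, (i : ℕ) + 1 < n →
      ∃ j, i < j ∧ DominatesOn G {w | ∃ k : Fin n, i ≤ k ∧ f k = w} (f j) (f i) := by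
  simp only [IsDismantlingOrder, List.length_ofFn, mem_drop_ofFn, List.getElem_ofFn,
    exists_exists_and_eq_and, Fin.le_iff_val_le_val, Fin.lt_def, Nat.lt_iff_add_one_le,
    Fin.forall_iff]
  exact forall_congr' fun i => ⟨fun h _ hi => h hi, fun h hi => h (by omega) hi⟩

theorem dismantlable_iff_exists_isDismantlingOrder :
    Dismantlable G ↔ ∃ l : List V, l.Nodup ∧ (∀ x, x ∈ l) ∧ IsDismantlingOrder G l := by
  constructor
  · rintro ⟨n, e, he⟩
    exact ⟨List.ofFn e, List.nodup_ofFn.mpr e.injective,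
      fun x => List.mem_ofFn.mpr ⟨e.symm x, e.apply_symm_apply x⟩,
      (isDismantlingOrder_ofFn_iff e).mpr he⟩
  · classical
    rintro ⟨l, hnd, hall, hl⟩
    refine ⟨l.length, hnd.getEquivOfForallMemList l hall, (isDismantlingOrder_ofFn_iff _).mp ?_⟩
    exact (List.ofFn_get l).symm ▸ hl

theorem dismantlable_induce_of_isDismantlingOrder {S : Set V} {l : List V}
    (hl : IsDismantlingOrder G l) (hnd : l.Nodup) (hS : ∀ x, x ∈ l ↔ x ∈ S) :
    Dismantlable (G.induce S) := by
  lift l to List S using fun x hx => (hS x).mp hx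
  rw [isDismantlingOrder_map_iff Subtype.val fun _ _ _ _ => mem_closedNbhd_induce] at hl
  exact dismantlable_iff_exists_isDismantlingOrder.mpr ⟨l, hnd.of_map _,
    fun x => (List.mem_map_of_injective Subtype.val_injective).mp ((hS x).mpr x.2), hl⟩

end Dismantlable

theorem dismantlable_remove_dominated_general {V : Type*} (G : SimpleGraph V)
    (hd : Dismantlable G) (u v : V) (huv : v ≠ u)
    (hdom : Dominates G v u) :
    Dismantlable (G.induce {w | w ≠ u}) := by
  classical
  obtain ⟨l, hnd, hall, hl⟩ := dismantlable_iff_exists_isDismantlingOrder.mp hd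
  obtain ⟨l', hperm, hl'⟩ :=
    hl.exists_perm_erase hnd (hall u) (hall v) huv fun w _ hw => hdom hw
  refine dismantlable_induce_of_isDismantlingOrder hl' (hperm.nodup_iff.mpr (hnd.erase u))
    fun x => ?_
  rw [hperm.mem_iff, hnd.mem_erase_iff]
  simp [hall x]

/-- removing a dominated vertex from a dismantlable graph (with at least two
vertices) leaves a dismantlable graph. -/
theorem dismantlable_remove_dominated {V : Type*} (G : SimpleGraph V)
    (hd : Dismantlable G) (hcard : 2 ≤ Nat.card V) (u v : V) (huv : v ≠ u)
    (hdom : Dominates G v u) :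
    Dismantlable (G.induce {w | w ≠ u}) :=
  dismantlable_remove_dominated_general G hd u v huv hdom
end

section
/- In a cop-win graph on n vertices, the cop has a strategy that captures the robber within at most n cop moves. -/
/-!
Call `u` a corner if `N[u] ⊆ N[v]` for some `v ≠ u`. Without corners the robber escapes forever
by staying outside the cop's closed neighbourhood. The retraction of `G` onto `G - u` sending a
corner `u` to `v` maps lazy walks to lazy walks, so a robber escaping on `G - u` would escape on
`G`, and the cop wins on `G` by playing a winning strategy of `G - u` against the image of the
robber. When he catches the image, the robber is either caught too or stands on `u` while the
cop stands on `v`, and then one more move suffices since `N[u] ⊆ N[v]`. Induction on the number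
of vertices gives at most `n` moves.
-/

section

open scoped Classical

variable {V : Type*} {G : SimpleGraph V} {u v x y : V}

theorem mem_closedNbhd_iff : x ∈ closedNbhd G y ↔ x = y ∨ G.Adj y x := Iff.rfl

theorem self_mem_closedNbhd (x : V) : x ∈ closedNbhd G x := Set.mem_insert x _

theorem mem_closedNbhd_comm_s7 : x ∈ closedNbhd G y ↔ y ∈ closedNbhd G x := by
  simp only [mem_closedNbhd_iff, eq_comm, G.adj_comm]

theorem Dominates.mem_closedNbhd (hd : Dominates G v u) : v ∈ closedNbhd G u :=
  mem_closedNbhd_comm_s7.mp (hd (self_mem_closedNbhd u))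

theorem coe_mem_closedNbhd_induce {s : Set V} {x y : s} :
    (y : V) ∈ closedNbhd G x ↔ y ∈ closedNbhd (G.induce s) x := by
  simp only [mem_closedNbhd_iff, Subtype.ext_iff, SimpleGraph.induce_adj]

def IsLazyWalk (G : SimpleGraph V) (p : ℕ → V) : Prop :=
  ∀ k, p (k + 1) ∈ closedNbhd G (p k)

namespace CopStrategy

def positions (cs : CopStrategy G) (r : ℕ → V) : ℕ → V
  | 0 => cs.init
  | k + 1 => cs.move (cs.positions r k) (r k)

theorem isLazyWalk_positions (cs : CopStrategy G) (r : ℕ → V) :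
    IsLazyWalk G (cs.positions r) :=
  fun _ => cs.valid _ _

/-- Quantified over robber trajectories rather than robber strategies, so that the cop can be
played against the image of the robber under a retraction. -/
def CapturesWithin (cs : CopStrategy G) (n : ℕ) : Prop :=
  ∀ r, IsLazyWalk G r → ∃ k < n, cs.positions r (k + 1) = r k

end CopStrategy

namespace RobberStrategy

def positions (rs : RobberStrategy G) (c : ℕ → V) : ℕ → V
  | 0 => rs.init (c 0)
  | k + 1 => rs.move (c (k + 1)) (rs.positions c k)

theorem isLazyWalk_positions (rs : RobberStrategy G) (c : ℕ → V) :
    IsLazyWalk G (rs.positions c) :=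
  fun _ => (rs.valid _ _).imp id id

def Evades (rs : RobberStrategy G) : Prop :=
  ∀ c, IsLazyWalk G c → ∀ k, c (k + 1) ≠ rs.positions c k

end RobberStrategy

theorem play_fst_eq_positions (cs : CopStrategy G) (rs : RobberStrategy G) (k : ℕ) :
    (play G cs rs k).1 = cs.positions (fun i => (play G cs rs i).2) k := by
  induction k with
  | zero => rfl
  | succ _ ih => exact congrArg (cs.move · _) ih

theorem play_snd_eq_positions (cs : CopStrategy G) (rs : RobberStrategy G) (k : ℕ) :
    (play G cs rs k).2 = rs.positions (fun i => (play G cs rs i).1) k := by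
  induction k with
  | zero => rfl
  | succ _ ih => exact congrArg (rs.move _) ih

theorem CopWin.not_evades (hc : CopWin G) (rs : RobberStrategy G) : ¬ rs.Evades := by
  intro hrs
  obtain ⟨cs, hcs⟩ := hc
  obtain ⟨k, hk⟩ := hcs rs
  have hwalk : IsLazyWalk G fun i => (play G cs rs i).1 := by
    simpa only [play_fst_eq_positions] using cs.isLazyWalk_positions _
  exact hrs _ hwalk k (hk.trans (play_snd_eq_positions cs rs k))

namespace RobberStrategy

noncomputable def escape (hstart : ∀ c : V, ∃ r, r ∉ closedNbhd G c) : RobberStrategy G where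
  init c := (hstart c).choose
  move c r := if h : ∃ x ∈ closedNbhd G r, x ∉ closedNbhd G c then h.choose else r
  valid c r := by
    split_ifs with h
    · exact (mem_closedNbhd_iff.mp h.choose_spec.1).imp id id
    · exact Or.inl rfl

theorem escape_move_not_mem (hstart : ∀ c : V, ∃ r, r ∉ closedNbhd G c) {c r : V}
    (h : ∃ x ∈ closedNbhd G r, x ∉ closedNbhd G c) :
    (escape hstart).move c r ∉ closedNbhd G c := by
  dsimp only [escape]
  rw [dif_pos h]
  exact h.choose_spec.2

theorem escape_evades (hstart : ∀ c : V, ∃ r, r ∉ closedNbhd G c)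
    (hstep : ∀ r c, r ≠ c → ∃ x ∈ closedNbhd G r, x ∉ closedNbhd G c) :
    (escape hstart).Evades := by
  intro c hc
  have houtside : ∀ k, (escape hstart).positions c k ∉ closedNbhd G (c k) := by
    intro k
    induction k with
    | zero => exact (hstart (c 0)).choose_spec
    | succ k ih =>
      have hne : (escape hstart).positions c k ≠ c (k + 1) := fun h => ih (h ▸ hc k)
      exact escape_move_not_mem hstart (hstep _ _ hne)
  exact fun k hcap => houtside k (hcap ▸ hc k)

end RobberStrategy

theorem exists_evades_of_forall_dominates_eq [Nontrivial V]
    (h : ∀ u v, Dominates G v u → v = u) : ∃ rs : RobberStrategy G, rs.Evades := by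
  have hstart : ∀ c : V, ∃ r, r ∉ closedNbhd G c := by
    intro c
    by_contra! hall
    obtain ⟨w, hw⟩ := exists_ne c
    exact hw (h w c fun x _ => hall x).symm
  have hstep : ∀ r c, r ≠ c → ∃ x ∈ closedNbhd G r, x ∉ closedNbhd G c := by
    intro r c hrc
    by_contra! hsub
    exact hrc (h r c hsub).symm
  exact ⟨_, RobberStrategy.escape_evades hstart hstep⟩

section Retraction

variable (hvu : v ≠ u)

noncomputable def cornerRetract (x : V) : {x | x ≠ u} :=
  if h : x = u then ⟨v, hvu⟩ else ⟨x, h⟩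

theorem cornerRetract_of_ne (hx : x ≠ u) : cornerRetract hvu x = ⟨x, hx⟩ := dif_neg hx

theorem cornerRetract_self : cornerRetract hvu u = ⟨v, hvu⟩ := dif_pos rfl

theorem cornerRetract_coe (x : {x | x ≠ u}) : cornerRetract hvu x = x :=
  cornerRetract_of_ne hvu x.2

theorem cornerRetract_mem_closedNbhd (hd : Dominates G v u) (hxy : y ∈ closedNbhd G x) :
    cornerRetract hvu y ∈ closedNbhd (G.induce {x | x ≠ u}) (cornerRetract hvu x) := by
  rw [← coe_mem_closedNbhd_induce]
  by_cases hx : x = u <;> by_cases hy : y = u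
  · simp only [hx, hy, cornerRetract_self, self_mem_closedNbhd]
  · rw [hx, cornerRetract_self, cornerRetract_of_ne hvu hy]
    exact hd (hx ▸ hxy)
  · rw [hy, cornerRetract_self, cornerRetract_of_ne hvu hx]
    exact mem_closedNbhd_comm_s7.mp (hd (mem_closedNbhd_comm_s7.mp (hy ▸ hxy)))
  · rwa [cornerRetract_of_ne hvu hx, cornerRetract_of_ne hvu hy]

theorem IsLazyWalk.cornerRetract_comp (hd : Dominates G v u) {p : ℕ → V} (hp : IsLazyWalk G p) :
    IsLazyWalk (G.induce {x | x ≠ u}) (cornerRetract hvu ∘ p) :=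
  fun k => cornerRetract_mem_closedNbhd hvu hd (hp k)

end Retraction

namespace RobberStrategy

variable (hvu : v ≠ u) (rs : RobberStrategy (G.induce {x | x ≠ u}))

noncomputable def lift : RobberStrategy G where
  init c := rs.init (cornerRetract hvu c)
  move c r := if h : r = u then r else rs.move (cornerRetract hvu c) ⟨r, h⟩
  valid c r := by
    split_ifs with h
    · exact Or.inl rfl
    · exact (rs.valid (cornerRetract hvu c) ⟨r, h⟩).imp (congrArg Subtype.val) id

theorem positions_lift (c : ℕ → V) (k : ℕ) :
    (rs.lift hvu).positions c k = rs.positions (cornerRetract hvu ∘ c) k := by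
  induction k with
  | zero => rfl
  | succ k ih =>
    rw [positions, ih]
    exact dif_neg (rs.positions _ k).2

variable {rs} in
theorem Evades.lift (hd : Dominates G v u) (hrs : rs.Evades) : (rs.lift hvu).Evades := by
  intro c hc k hcap
  refine hrs _ (hc.cornerRetract_comp hvu hd) k ?_
  rw [← cornerRetract_coe hvu (rs.positions _ k), ← positions_lift, ← hcap]
  rfl

end RobberStrategy

namespace CopStrategy

variable (hd : Dominates G v u) (hvu : v ≠ u) (cs : CopStrategy (G.induce {x | x ≠ u}))

noncomputable def lift : CopStrategy G where
  init := cs.init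
  move c r :=
    if r ∈ closedNbhd G c then r
    else if c = u then v
    else cs.move (cornerRetract hvu c) (cornerRetract hvu r)
  valid c r := by
    split_ifs with hr hc
    · exact (mem_closedNbhd_iff.mp hr).imp id id
    · exact (mem_closedNbhd_iff.mp (hc ▸ hd.mem_closedNbhd)).imp id id
    · have hvalid := (cs.valid (cornerRetract hvu c) (cornerRetract hvu r)).imp
        (congrArg Subtype.val) id
      rw [cornerRetract_of_ne hvu hc] at hvalid ⊢
      exact hvalid

theorem lift_move_of_mem {c r : V} (hr : r ∈ closedNbhd G c) : (cs.lift hd hvu).move c r = r :=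
  if_pos hr

theorem lift_move_of_not_mem {c r : V} (hr : r ∉ closedNbhd G c) (hc : c ≠ u) :
    (cs.lift hd hvu).move c r = cs.move (cornerRetract hvu c) (cornerRetract hvu r) := by
  simp only [lift, if_neg hr, if_neg hc]

theorem captured_or_positions_lift (r : ℕ → V) (k : ℕ) :
    (∃ i < k, (cs.lift hd hvu).positions r (i + 1) = r i) ∨
      (cs.lift hd hvu).positions r k = cs.positions (cornerRetract hvu ∘ r) k := by
  induction k with
  | zero => exact Or.inr rfl
  | succ k ih =>
    rcases ih with ⟨i, hik, hcap⟩ | hk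
    · exact Or.inl ⟨i, by omega, hcap⟩
    by_cases hr : r k ∈ closedNbhd G ((cs.lift hd hvu).positions r k)
    · exact Or.inl ⟨k, k.lt_succ_self, lift_move_of_mem hd hvu cs hr⟩
    · right
      have hku : (cs.lift hd hvu).positions r k ≠ u := hk ▸ (cs.positions _ k).2
      rw [positions, lift_move_of_not_mem hd hvu cs hr hku, hk, cornerRetract_coe]
      rfl

variable {cs} in
theorem CapturesWithin.lift {m : ℕ} (hcs : cs.CapturesWithin m) :
    (cs.lift hd hvu).CapturesWithin (m + 1) := by
  intro r hr
  obtain ⟨j, hjm, hcap⟩ := hcs _ (hr.cornerRetract_comp hvu hd)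
  rcases captured_or_positions_lift hd hvu cs r (j + 1) with ⟨i, hij, hi⟩ | hpos
  · exact ⟨i, by omega, hi⟩
  rw [hcap] at hpos
  by_cases hju : r j = u
  · refine ⟨j + 1, by omega, lift_move_of_mem hd hvu cs ?_⟩
    rw [hpos, Function.comp_apply, hju, cornerRetract_self]
    exact hd (hju ▸ hr j)
  · exact ⟨j, by omega, by rw [hpos, Function.comp_apply, cornerRetract_of_ne hvu hju]⟩

end CopStrategy

theorem exists_capturesWithin_card_of_subsingleton [Fintype V] [Subsingleton V]
    (G : SimpleGraph V) (h : ∀ rs : RobberStrategy G, ¬ rs.Evades) :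
    ∃ cs : CopStrategy G, cs.CapturesWithin (Fintype.card V) := by
  cases isEmpty_or_nonempty V
  · exact (h ⟨id, fun _ r => r, fun _ _ => Or.inl rfl⟩ fun c _ => isEmptyElim (c 0)).elim
  · exact ⟨⟨Classical.arbitrary V, fun _ r => r, fun _ _ => Or.inl (Subsingleton.elim _ _)⟩,
      fun _ _ => ⟨0, Fintype.card_pos, Subsingleton.elim _ _⟩⟩

theorem exists_capturesWithin_card [Fintype V] (G : SimpleGraph V)
    (h : ∀ rs : RobberStrategy G, ¬ rs.Evades) :
    ∃ cs : CopStrategy G, cs.CapturesWithin (Fintype.card V) := by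
  induction hn : Fintype.card V using Nat.strong_induction_on generalizing V with
  | _ n ih =>
    subst hn
    rcases subsingleton_or_nontrivial V with _ | _
    · exact exists_capturesWithin_card_of_subsingleton G h
    obtain ⟨u, v, hd, hvu⟩ : ∃ u v, Dominates G v u ∧ v ≠ u := by
      by_contra! hno
      obtain ⟨rs, hrs⟩ := exists_evades_of_forall_dominates_eq hno
      exact h rs hrs
    have hcard : Fintype.card {x | x ≠ u} = Fintype.card V - 1 := Set.card_ne_eq u
    obtain ⟨cs, hcs⟩ := ih _ (hcard ▸ Nat.sub_lt Fintype.card_pos one_pos)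
      (G.induce {x | x ≠ u}) (fun rs hrs => h _ (hrs.lift hvu hd)) rfl
    refine ⟨cs.lift hd hvu, ?_⟩
    rw [← Nat.sub_add_cancel Fintype.card_pos, ← hcard]
    exact hcs.lift hd hvu

end

theorem copWin_capture_in_card_moves_general {V : Type*} [Fintype V] (G : SimpleGraph V)
    (hc : CopWin G) :
    ∃ cs : CopStrategy G, ∀ rs : RobberStrategy G,
      ∃ k : ℕ, k < Fintype.card V ∧ (play G cs rs (k + 1)).1 = (play G cs rs k).2 := by
  obtain ⟨cs, hcs⟩ := exists_capturesWithin_card G hc.not_evades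
  refine ⟨cs, fun rs => ?_⟩
  have hwalk : IsLazyWalk G fun i => (play G cs rs i).2 := by
    simpa only [play_snd_eq_positions] using rs.isLazyWalk_positions _
  obtain ⟨k, hk, hcap⟩ := hcs _ hwalk
  exact ⟨k, hk, (play_fst_eq_positions cs rs (k + 1)).trans hcap⟩

/-- in a cop-win graph on `n` vertices the cop can guarantee capture within
at most `n` cop moves. -/
theorem copWin_capture_in_card_moves {V : Type*} [Fintype V] (G : SimpleGraph V)
    (hG : G.Connected) (hc : CopWin G) :
    ∃ cs : CopStrategy G, ∀ rs : RobberStrategy G,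
      ∃ k : ℕ, k < Fintype.card V ∧ (play G cs rs (k + 1)).1 = (play G cs rs k).2 :=
  copWin_capture_in_card_moves_general G hc
end
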